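/- Fix (q0,q1) ∈ E × E and define the continuous bilinear map C(u0,u1) := D₁(D₂L_d + f⁺)(q0,q1)(u0)(u1) on E × E, i.e. C(u0,u1) is the derivative at q0, in the direction u0, of the map x ↦ D₂L_d(x,q1)(u1) + f⁺(x,q1)(u1). If C is nondegenerate — the induced linear map E → (E →L[ℝ] ℝ), u0 ↦ C(u0,·), is bijective — then the alternating bilinear form ω⁺(q0,q1) on E × E is nondegenerate: if ω⁺(q0,q1)(U,V) = 0 for all V ∈ E × E then U = 0. Analogously, if the bilinear map (u1,u0) ↦ −D₂(D₁L_d + f⁻)(q0,q1)(u1)(u0) is nondegenerate, then ω⁻(q0,q1) is nondegenerate. -/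

import Mathlib

open ContinuousLinearMap

variable {E : Type*} [NormedAddCommGroup E] [NormedSpace ℝ E] [FiniteDimensional ℝ E]

/-- Partial Fréchet derivative in the first variable. -/
noncomputable def D1 (L : E × E → ℝ) (x : E × E) : E →L[ℝ] ℝ :=
  fderiv ℝ (fun a => L (a, x.2)) x.1

/-- Partial Fréchet derivative in the second variable. -/
noncomputable def D2 (L : E × E → ℝ) (x : E × E) : E →L[ℝ] ℝ :=
  fderiv ℝ (fun b => L (x.1, b)) x.2

/-- The force 1-form `f_d` on `E × E`. -/
noncomputable def fd (fm fp : E × E → (E →L[ℝ] ℝ)) (x : E × E) : (E × E) →L[ℝ] ℝ :=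
  (fm x).comp (ContinuousLinearMap.fst ℝ E E) + (fp x).comp (ContinuousLinearMap.snd ℝ E E)

/-- The 1-form `θ⁺` on `E × E`. -/
noncomputable def thetaP (Ld : E × E → ℝ) (fp : E × E → (E →L[ℝ] ℝ)) (x : E × E) :
    (E × E) →L[ℝ] ℝ := (D2 Ld x + fp x).comp (ContinuousLinearMap.snd ℝ E E)

/-- The 1-form `θ⁻` on `E × E`. -/
noncomputable def thetaM (Ld : E × E → ℝ) (fm : E × E → (E →L[ℝ] ℝ)) (x : E × E) :
    (E × E) →L[ℝ] ℝ := -((D1 Ld x + fm x).comp (ContinuousLinearMap.fst ℝ E E))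

/-- The exterior derivative of a 1-form `α` on `E × E`, as a function of two vectors. -/
noncomputable def extd (α : E × E → ((E × E) →L[ℝ] ℝ)) (x : E × E) (U V : E × E) : ℝ :=
  fderiv ℝ α x U V - fderiv ℝ α x V U

/-- The 2-form `ω⁺ := -dθ⁺` on `E × E`. -/
noncomputable def omegaP (Ld : E × E → ℝ) (fp : E × E → (E →L[ℝ] ℝ)) (x : E × E)
    (U V : E × E) : ℝ := -extd (thetaP Ld fp) x U V

/-- The 2-form `ω⁻ := -dθ⁻` on `E × E`. -/
noncomputable def omegaM (Ld : E × E → ℝ) (fm : E × E → (E →L[ℝ] ℝ)) (x : E × E)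
    (U V : E × E) : ℝ := -extd (thetaM Ld fm) x U V

/-- The forced discrete Legendre transform `FL⁺`. -/
noncomputable def FLp (Ld : E × E → ℝ) (fp : E × E → (E →L[ℝ] ℝ)) (x : E × E) :
    E × (E →L[ℝ] ℝ) := (x.2, D2 Ld x + fp x)

/-- The forced discrete Legendre transform `FL⁻`. -/
noncomputable def FLm (Ld : E × E → ℝ) (fm : E × E → (E →L[ℝ] ℝ)) (x : E × E) :
    E × (E →L[ℝ] ℝ) := (x.1, -D1 Ld x - fm x)


set_option linter.unusedSectionVars false

section Aux
variable {F : Type*} [NormedAddCommGroup F] [NormedSpace ℝ F]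

theorem aux_eq_zero_of_forall_dual {u : E} (h : ∀ φ : E →L[ℝ] ℝ, φ u = 0) : u = 0 := by
  by_contra hu
  obtain ⟨φ, -, hφ⟩ := exists_dual_vector ℝ u (norm_ne_zero_iff.mpr hu)
  rw [h φ] at hφ
  exact hu (norm_eq_zero.mp (by exact_mod_cast hφ.symm))

theorem aux_fderiv_partial_left (g : E × E → F) (hg : Differentiable ℝ g) (q0 q1 : E) :
    fderiv ℝ (fun a => g (a, q1)) q0
      = (fderiv ℝ g (q0, q1)).comp (ContinuousLinearMap.inl ℝ E E) :=
  (((hg (q0, q1)).hasFDerivAt).comp q0 (hasFDerivAt_prodMk_left q0 q1)).fderiv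

theorem aux_fderiv_partial_right (g : E × E → F) (hg : Differentiable ℝ g) (q0 q1 : E) :
    fderiv ℝ (fun b => g (q0, b)) q1
      = (fderiv ℝ g (q0, q1)).comp (ContinuousLinearMap.inr ℝ E E) :=
  (((hg (q0, q1)).hasFDerivAt).comp q1 (hasFDerivAt_prodMk_right q0 q1)).fderiv

end Aux
theorem aux_contDiff_D2 (Ld : E × E → ℝ) (hLd : ContDiff ℝ (⊤ : ℕ∞) Ld) :
    ContDiff ℝ (⊤ : ℕ∞) (fun x : E × E => D2 Ld x) := by
  have h1 : ContDiff ℝ (⊤ : ℕ∞) (fderiv ℝ Ld) := hLd.fderiv_right (by simp)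
  have heq : (fun x : E × E => D2 Ld x)
      = fun x => ((ContinuousLinearMap.compL ℝ E (E × E) ℝ).flip
          (ContinuousLinearMap.inr ℝ E E)) (fderiv ℝ Ld x) := by
    funext x
    have h : HasFDerivAt (fun b => Ld (x.1, b))
        ((fderiv ℝ Ld x).comp (ContinuousLinearMap.inr ℝ E E)) x.2 := by
      have := ((hLd.differentiable (by simp) (x.1, x.2)).hasFDerivAt).comp x.2
        (hasFDerivAt_prodMk_right (𝕜 := ℝ) x.1 x.2)
      exact this
    simpa [D2] using h.fderiv
  rw [heq]
  exact (ContinuousLinearMap.contDiff _).comp h1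

theorem aux_contDiff_D1 (Ld : E × E → ℝ) (hLd : ContDiff ℝ (⊤ : ℕ∞) Ld) :
    ContDiff ℝ (⊤ : ℕ∞) (fun x : E × E => D1 Ld x) := by
  have h1 : ContDiff ℝ (⊤ : ℕ∞) (fderiv ℝ Ld) := hLd.fderiv_right (by simp)
  have heq : (fun x : E × E => D1 Ld x)
      = fun x => ((ContinuousLinearMap.compL ℝ E (E × E) ℝ).flip
          (ContinuousLinearMap.inl ℝ E E)) (fderiv ℝ Ld x) := by
    funext x
    have h : HasFDerivAt (fun a => Ld (a, x.2))
        ((fderiv ℝ Ld x).comp (ContinuousLinearMap.inl ℝ E E)) x.1 := by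
      have := ((hLd.differentiable (by simp) (x.1, x.2)).hasFDerivAt).comp x.1
        (hasFDerivAt_prodMk_left (𝕜 := ℝ) x.1 x.2)
      exact this
    simpa [D1] using h.fderiv
  rw [heq]
  exact (ContinuousLinearMap.contDiff _).comp h1

theorem aux_fderiv_thetaP (Ld : E × E → ℝ) (fp : E × E → (E →L[ℝ] ℝ))
    (hLd : ContDiff ℝ (⊤ : ℕ∞) Ld) (hfp : ContDiff ℝ (⊤ : ℕ∞) fp) (x : E × E) :
    fderiv ℝ (thetaP Ld fp) x
      = (((ContinuousLinearMap.compL ℝ (E × E) E ℝ).flip (ContinuousLinearMap.snd ℝ E E)).comp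
          (fderiv ℝ (fun y => D2 Ld y + fp y) x)) := by
  have hgd : DifferentiableAt ℝ (fun y : E × E => D2 Ld y + fp y) x :=
    (((aux_contDiff_D2 Ld hLd).add hfp).differentiable (by simp)) x
  have heq : thetaP Ld fp = fun y =>
      ((ContinuousLinearMap.compL ℝ (E × E) E ℝ).flip (ContinuousLinearMap.snd ℝ E E))
        ((fun y : E × E => D2 Ld y + fp y) y) := by
    funext y; simp [thetaP]
  rw [heq]
  exact (((ContinuousLinearMap.compL ℝ (E × E) E ℝ).flip
    (ContinuousLinearMap.snd ℝ E E)).hasFDerivAt.comp x hgd.hasFDerivAt).fderiv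

theorem aux_fderiv_thetaM (Ld : E × E → ℝ) (fm : E × E → (E →L[ℝ] ℝ))
    (hLd : ContDiff ℝ (⊤ : ℕ∞) Ld) (hfm : ContDiff ℝ (⊤ : ℕ∞) fm) (x : E × E) :
    fderiv ℝ (thetaM Ld fm) x
      = -(((ContinuousLinearMap.compL ℝ (E × E) E ℝ).flip (ContinuousLinearMap.fst ℝ E E)).comp
          (fderiv ℝ (fun y => D1 Ld y + fm y) x)) := by
  have hgd : DifferentiableAt ℝ (fun y : E × E => D1 Ld y + fm y) x :=
    (((aux_contDiff_D1 Ld hLd).add hfm).differentiable (by simp)) x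
  have heq : thetaM Ld fm = fun y =>
      -(((ContinuousLinearMap.compL ℝ (E × E) E ℝ).flip (ContinuousLinearMap.fst ℝ E E))
        ((fun y : E × E => D1 Ld y + fm y) y)) := by
    funext y; simp [thetaM]
  rw [heq]
  have h := (((ContinuousLinearMap.compL ℝ (E × E) E ℝ).flip
    (ContinuousLinearMap.fst ℝ E E)).hasFDerivAt.comp x hgd.hasFDerivAt).neg
  exact h.fderiv

theorem aux_omegaP_eq (Ld : E × E → ℝ) (fp : E × E → (E →L[ℝ] ℝ))
    (hLd : ContDiff ℝ (⊤ : ℕ∞) Ld) (hfp : ContDiff ℝ (⊤ : ℕ∞) fp) (x U V : E × E) :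
    omegaP Ld fp x U V
      = fderiv ℝ (fun y => D2 Ld y + fp y) x V U.2
        - fderiv ℝ (fun y => D2 Ld y + fp y) x U V.2 := by
  simp [omegaP, extd, aux_fderiv_thetaP Ld fp hLd hfp x]
  try ring

theorem aux_omegaM_eq (Ld : E × E → ℝ) (fm : E × E → (E →L[ℝ] ℝ))
    (hLd : ContDiff ℝ (⊤ : ℕ∞) Ld) (hfm : ContDiff ℝ (⊤ : ℕ∞) fm) (x U V : E × E) :
    omegaM Ld fm x U V
      = fderiv ℝ (fun y => D1 Ld y + fm y) x U V.1
        - fderiv ℝ (fun y => D1 Ld y + fm y) x V U.1 := by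
  simp [omegaM, extd, aux_fderiv_thetaM Ld fm hLd hfm x]
  try ring
/-- **Nondegeneracy of `ω⁺` and `ω⁻` from regularity of the system.**
If the bilinear map `C(u0,u1) := D₁(D₂L_d + f⁺)(q0,q1)(u0)(u1)` is nondegenerate then the
alternating form `ω⁺(q0,q1)` is nondegenerate; analogously, if the bilinear map
`(u1,u0) ↦ −D₂(D₁L_d + f⁻)(q0,q1)(u1)(u0)` is nondegenerate then `ω⁻(q0,q1)` is
nondegenerate. -/
theorem omegaP_omegaM_nondegenerate_of_regular
    (Ld : E × E → ℝ) (fm fp : E × E → (E →L[ℝ] ℝ))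
    (hLd : ContDiff ℝ (⊤ : ℕ∞) Ld) (hfm : ContDiff ℝ (⊤ : ℕ∞) fm) (hfp : ContDiff ℝ (⊤ : ℕ∞) fp)
    (q0 q1 : E) :
    (Function.Bijective
        (fun u0 : E => fderiv ℝ (fun a : E => D2 Ld (a, q1) + fp (a, q1)) q0 u0) →
      ∀ U : E × E, (∀ V : E × E, omegaP Ld fp (q0, q1) U V = 0) → U = 0)
    ∧ (Function.Bijective
        (fun u1 : E => -(fderiv ℝ (fun b : E => D1 Ld (q0, b) + fm (q0, b)) q1 u1)) →
      ∀ U : E × E, (∀ V : E × E, omegaM Ld fm (q0, q1) U V = 0) → U = 0) := by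
  constructor
  · intro hB U hU
    set gP : E × E → (E →L[ℝ] ℝ) := fun y => D2 Ld y + fp y with hgPdef
    have hgP : Differentiable ℝ gP := ((aux_contDiff_D2 Ld hLd).add hfp).differentiable (by simp)
    set Dg := fderiv ℝ gP (q0, q1) with hDgdef
    have hkey : ∀ V : E × E, Dg V U.2 - Dg U V.2 = 0 := fun V => by
      rw [← aux_omegaP_eq Ld fp hLd hfp (q0, q1) U V]; exact hU V
    have hfun : (fun u0 : E => fderiv ℝ (fun a : E => D2 Ld (a, q1) + fp (a, q1)) q0 u0)
        = fun u0 => Dg (u0, 0) := by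
      funext u0
      show fderiv ℝ (fun a => gP (a, q1)) q0 u0 = Dg (u0, 0)
      rw [aux_fderiv_partial_left gP hgP q0 q1]; rfl
    rw [hfun] at hB
    have h2 : U.2 = 0 := by
      apply aux_eq_zero_of_forall_dual
      intro φ
      obtain ⟨v, hv⟩ := hB.surjective φ
      have h := hkey (v, 0)
      simp only [map_zero] at h
      simp only at hv
      rw [← hv]
      simpa using h
    have hDU : Dg U = 0 := by
      ext w
      have h := hkey (0, w)
      rw [h2] at h
      simpa using h
    have h1 : U.1 = 0 := by
      apply hB.injective
      show Dg (U.1, 0) = Dg (0, 0)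
      have hUeq : (U.1, (0 : E)) = U := Prod.ext rfl h2.symm
      rw [hUeq, hDU, Prod.mk_zero_zero, map_zero]
    exact Prod.ext h1 h2
  · intro hB U hU
    set gM : E × E → (E →L[ℝ] ℝ) := fun y => D1 Ld y + fm y with hgMdef
    have hgM : Differentiable ℝ gM := ((aux_contDiff_D1 Ld hLd).add hfm).differentiable (by simp)
    set Dh := fderiv ℝ gM (q0, q1) with hDhdef
    have hkey : ∀ V : E × E, Dh U V.1 - Dh V U.1 = 0 := fun V => by
      rw [← aux_omegaM_eq Ld fm hLd hfm (q0, q1) U V]; exact hU V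
    have hfun : (fun u1 : E => -(fderiv ℝ (fun b : E => D1 Ld (q0, b) + fm (q0, b)) q1 u1))
        = fun u1 => -(Dh (0, u1)) := by
      funext u1
      show -(fderiv ℝ (fun b => gM (q0, b)) q1 u1) = -(Dh (0, u1))
      rw [aux_fderiv_partial_right gM hgM q0 q1]; rfl
    rw [hfun] at hB
    have h1 : U.1 = 0 := by
      apply aux_eq_zero_of_forall_dual
      intro φ
      obtain ⟨w, hw⟩ := hB.surjective φ
      have h := hkey (0, w)
      simp only [map_zero] at h
      simp only at hw
      rw [← hw]
      simp only [ContinuousLinearMap.neg_apply]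
      simpa using h
    have hDU : Dh U = 0 := by
      ext v
      have h := hkey (v, 0)
      rw [h1] at h
      simpa using h
    have h2 : U.2 = 0 := by
      apply hB.injective
      show -(Dh (0, U.2)) = -(Dh (0, 0))
      have hUeq : ((0 : E), U.2) = U := Prod.ext h1.symm rfl
      rw [hUeq, hDU, Prod.mk_zero_zero, map_zero]
    exact Prod.ext h1 h2
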